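/- Let v ∈ C¹(B_{R'} \ {0}; R) vanish outside B_{R'} in R², and let 0 < L < R'. Then ∫_{B_{R'}\B_L} |v(r)|/r² dr ≤ C log^{3/2}(R'/L) ‖∇v‖_{L²(R²)}, where C is independent of L, R', v. -/

import Mathlib

/-!
Write `e_θ = (cos θ, sin θ)` and `E(θ) = ∫_L^{R'} s ‖∇v(s e_θ)‖² ds`. Along each ray,
`v(R' e_θ) = 0` gives `|v(r e_θ)| ≤ ∫_r^{R'} ‖∇v(s e_θ)‖ ds`, and Cauchy–Schwarz against the
weight `s` turns this into `|v(r e_θ)| ≤ E(θ)^{1/2} log(R'/r)^{1/2}`. In polar coordinates the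
left-hand side is therefore at most
`(∫_L^{R'} log(R'/r)^{1/2} dr/r) ∫ E(θ)^{1/2} dθ = (2/3) log^{3/2}(R'/L) ∫ E(θ)^{1/2} dθ`,
and Cauchy–Schwarz in `θ` bounds the last integral by `(2π)^{1/2} ‖∇v‖_{L²}`.
-/

open MeasureTheory Real Set intervalIntegral

theorem integral_mul_le_sqrt_integral_sq_mul_sqrt_integral_sq {α : Type*} [MeasurableSpace α]
    {μ : Measure α} {f g : α → ℝ} (hf₀ : 0 ≤ᵐ[μ] f) (hg₀ : 0 ≤ᵐ[μ] g)
    (hf : MemLp f 2 μ) (hg : MemLp g 2 μ) :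
    ∫ a, f a * g a ∂μ ≤ √(∫ a, f a ^ 2 ∂μ) * √(∫ a, g a ^ 2 ∂μ) := by
  have h := integral_mul_le_Lp_mul_Lq_of_nonneg Real.HolderConjugate.two_two hf₀ hg₀
    (by rwa [ENNReal.ofReal_ofNat]) (by rwa [ENNReal.ofReal_ofNat])
  simpa only [rpow_two, ← sqrt_eq_rpow] using h

theorem integral_le_sqrt_integral_mul_sq_mul_sqrt_log {a b : ℝ} (ha : 0 < a) (hab : a ≤ b)
    {g : ℝ → ℝ} (hg : ContinuousOn g (Icc a b)) (hg₀ : ∀ s ∈ Icc a b, 0 ≤ g s) :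
    ∫ s in a..b, g s ≤ √(∫ s in a..b, s * g s ^ 2) * √(log (b / a)) := by
  have hpos : ∀ s ∈ Ioc a b, 0 < s := fun s hs => ha.trans hs.1
  have hsq : ∀ s ∈ Ioc a b, √s ^ 2 = s := fun s hs => sq_sqrt (hpos s hs).le
  have memLp : ∀ φ : ℝ → ℝ, ContinuousOn φ (Icc a b) → MemLp φ 2 (volume.restrict (Ioc a b)) :=
    fun φ hφ => (memLp_two_iff_integrable_sq
      ((hφ.mono Ioc_subset_Icc_self).aestronglyMeasurable measurableSet_Ioc)).2
      ((hφ.pow 2).integrableOn_Icc.mono_set Ioc_subset_Icc_self)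
  have hcs := integral_mul_le_sqrt_integral_sq_mul_sqrt_integral_sq
    (μ := volume.restrict (Ioc a b)) (f := fun s => √s * g s) (g := fun s => (√s)⁻¹)
    ((ae_restrict_iff' measurableSet_Ioc).2 (.of_forall fun s hs =>
      mul_nonneg (sqrt_nonneg s) (hg₀ s (Ioc_subset_Icc_self hs))))
    (.of_forall fun s => inv_nonneg.2 (sqrt_nonneg s))
    (memLp _ (continuous_sqrt.continuousOn.mul hg))
    (memLp _ (continuous_sqrt.continuousOn.inv₀ fun s hs => (sqrt_pos.2 (ha.trans_le hs.1)).ne'))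
  rw [← integral_inv_of_pos ha (ha.trans_le hab)]
  simp only [integral_of_le hab]
  calc ∫ s in Ioc a b, g s = ∫ s in Ioc a b, √s * g s * (√s)⁻¹ :=
        setIntegral_congr_fun measurableSet_Ioc fun s hs => by
          field_simp [(sqrt_pos.2 (hpos s hs)).ne']
    _ ≤ _ := hcs
    _ = _ := by
        congr 2 <;> refine setIntegral_congr_fun measurableSet_Ioc fun s hs => ?_
        · simp only [mul_pow, hsq s hs]
        · simp only [inv_pow, hsq s hs]

theorem hasDerivAt_log_div {b r : ℝ} (hb : b ≠ 0) (hr : r ≠ 0) :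
    HasDerivAt (fun s => log (b / s)) (-r⁻¹) r := by
  have h := ((hasDerivAt_inv hr).const_mul b).log (mul_ne_zero hb (inv_ne_zero hr))
  simp only [← div_eq_mul_inv] at h
  refine h.congr_deriv ?_
  field_simp

theorem integral_sqrt_log_div_div {a b : ℝ} (ha : 0 < a) (hab : a ≤ b) :
    ∫ r in a..b, √(log (b / r)) / r = 2 / 3 * log (b / a) ^ ((3 : ℝ) / 2) := by
  have hpos : ∀ r ∈ Icc a b, 0 < r := fun r hr => ha.trans_le hr.1
  have hlog : ContinuousOn (fun r => log (b / r)) (Icc a b) :=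
    continuousOn_const.div continuousOn_id (fun r hr => (hpos r hr).ne') |>.log
      fun r hr => (div_pos (ha.trans_le hab) (hpos r hr)).ne'
  have hderiv : ∀ r ∈ Ioo a b, HasDerivAt (fun r => -(2 / 3) * log (b / r) ^ ((3 : ℝ) / 2))
      (√(log (b / r)) / r) r := by
    intro r hr
    have hr₀ : 0 < r := ha.trans hr.1
    have hlog_pos : 0 < log (b / r) := log_pos ((one_lt_div hr₀).2 hr.2)
    refine (((hasDerivAt_log_div (ha.trans_le hab).ne' hr₀.ne').rpow_const
      (Or.inl hlog_pos.ne')).const_mul (-(2 / 3))).congr_deriv ?_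
    rw [sqrt_eq_rpow]
    norm_num
    field_simp
  rw [integral_eq_sub_of_hasDerivAt_of_le hab
    (continuousOn_const.mul (hlog.rpow_const fun _ _ => Or.inr (by norm_num))) hderiv
    (((continuous_sqrt.comp_continuousOn hlog).div continuousOn_id
      fun r hr => (hpos r hr).ne').intervalIntegrable_of_Icc hab)]
  simp [div_self (ha.trans_le hab).ne']

section Ray

variable {E : Type*} [NormedAddCommGroup E] [NormedSpace ℝ E] {f : E → ℝ}

noncomputable def rayEnergy (f : E → ℝ) (a b : ℝ) (u : E) : ℝ :=
  ∫ s in a..b, s * ‖fderiv ℝ f (s • u)‖ ^ 2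

theorem continuousOn_fderiv_smul (hf : ContDiffOn ℝ 1 f {0}ᶜ) {u : E} (hu : u ≠ 0) :
    ContinuousOn (fun s : ℝ => fderiv ℝ f (s • u)) (Ioi 0) :=
  (hf.continuousOn_fderiv_of_isOpen isOpen_compl_singleton le_rfl).comp
    (continuousOn_id.smul continuousOn_const) fun _ hs => smul_ne_zero (ne_of_gt hs) hu

theorem abs_apply_smul_le_integral_norm_fderiv (hf : ContDiffOn ℝ 1 f {0}ᶜ) {u : E}
    (hu : ‖u‖ = 1) {r R : ℝ} (hr : 0 < r) (hrR : r ≤ R) (hR : f (R • u) = 0) :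
    |f (r • u)| ≤ ∫ s in r..R, ‖fderiv ℝ f (s • u)‖ := by
  have hu₀ : u ≠ 0 := norm_ne_zero_iff.1 (by rw [hu]; exact one_ne_zero)
  have hcont : ContinuousOn (fun s : ℝ => fderiv ℝ f (s • u)) (Icc r R) :=
    (continuousOn_fderiv_smul hf hu₀).mono fun s hs => hr.trans_le hs.1
  have hftc : ∫ s in r..R, fderiv ℝ f (s • u) u = f (R • u) - f (r • u) := by
    refine integral_eq_sub_of_hasDerivAt (f := fun t : ℝ => f (t • u)) (fun s hs => ?_)
      ((hcont.clm_apply continuousOn_const).intervalIntegrable_of_Icc hrR)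
    rw [uIcc_of_le hrR] at hs
    have hs₀ : s • u ≠ 0 := smul_ne_zero (hr.trans_le hs.1).ne' hu₀
    have hdiff : DifferentiableAt ℝ f (s • u) :=
      (hf.differentiableOn one_ne_zero).differentiableAt (isOpen_compl_singleton.mem_nhds hs₀)
    exact hdiff.hasFDerivAt.comp_hasDerivAt s
      ((hasDerivAt_id s).smul_const u |>.congr_deriv (one_smul _ _))
  rw [← abs_neg, ← zero_sub, ← hR, ← hftc, ← Real.norm_eq_abs]
  refine norm_integral_le_of_norm_le hrR (.of_forall fun s _ => ?_)
    (hcont.norm.intervalIntegrable_of_Icc hrR)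
  simpa [hu] using (fderiv ℝ f (s • u)).le_opNorm u

theorem abs_apply_smul_le_sqrt_rayEnergy_mul_sqrt_log (hf : ContDiffOn ℝ 1 f {0}ᶜ) {u : E}
    (hu : ‖u‖ = 1) {L r R : ℝ} (hL : 0 < L) (hLr : L ≤ r) (hrR : r ≤ R) (hR : f (R • u) = 0) :
    |f (r • u)| ≤ √(rayEnergy f L R u) * √(log (R / r)) := by
  have hr : 0 < r := hL.trans_le hLr
  have hu₀ : u ≠ 0 := norm_ne_zero_iff.1 (by rw [hu]; exact one_ne_zero)
  have hnorm : ContinuousOn (fun s : ℝ => ‖fderiv ℝ f (s • u)‖) (Icc L R) :=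
    (continuousOn_fderiv_smul hf hu₀).norm.mono fun s hs => hL.trans_le hs.1
  have hmono : ∫ s in r..R, s * ‖fderiv ℝ f (s • u)‖ ^ 2 ≤ rayEnergy f L R u :=
    integral_mono_interval hLr hrR le_rfl
      ((ae_restrict_iff' measurableSet_Ioc).2 (.of_forall fun s hs =>
        mul_nonneg (hL.trans hs.1).le (sq_nonneg _)))
      ((continuousOn_id.mul (hnorm.pow 2)).intervalIntegrable_of_Icc (hLr.trans hrR))
  calc |f (r • u)| ≤ ∫ s in r..R, ‖fderiv ℝ f (s • u)‖ :=
        abs_apply_smul_le_integral_norm_fderiv hf hu hr hrR hR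
    _ ≤ √(∫ s in r..R, s * ‖fderiv ℝ f (s • u)‖ ^ 2) * √(log (R / r)) :=
        integral_le_sqrt_integral_mul_sq_mul_sqrt_log hr hrR
          (hnorm.mono (Icc_subset_Icc_left hLr)) fun _ _ => norm_nonneg _
    _ ≤ √(rayEnergy f L R u) * √(log (R / r)) := by gcongr

theorem continuous_rayEnergy_comp {X : Type*} [TopologicalSpace X] (hf : ContDiffOn ℝ 1 f {0}ᶜ)
    {u : X → E} (hu : Continuous u) (hu₀ : ∀ x, u x ≠ 0) {L R : ℝ} (hL : 0 < L) (hLR : L ≤ R) :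
    Continuous fun x => rayEnergy f L R (u x) := by
  -- clamping `s` to `[L, ∞)` keeps the integrand away from `0` and does not change it on `[L, R]`
  have hclamp : Continuous
      (Function.uncurry fun x (s : ℝ) => s * ‖fderiv ℝ f (max s L • u x)‖ ^ 2) :=
    continuous_snd.mul
      (((hf.continuousOn_fderiv_of_isOpen isOpen_compl_singleton le_rfl).comp_continuous
        ((continuous_snd.max continuous_const).smul (hu.comp continuous_fst))
        fun p => smul_ne_zero (lt_max_of_lt_right hL).ne' (hu₀ p.1)).norm.pow 2)
  refine (continuous_parametric_intervalIntegral_of_continuous' hclamp L R).congr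
    fun x => integral_congr fun s hs => ?_
  rw [uIcc_of_le hLR] at hs
  simp only [max_eq_left hs.1]

end Ray

noncomputable def polarUnit (θ : ℝ) : EuclideanSpace ℝ (Fin 2) := !₂[cos θ, sin θ]

theorem norm_polarUnit (θ : ℝ) : ‖polarUnit θ‖ = 1 := by
  simp [polarUnit, EuclideanSpace.norm_eq, Fin.sum_univ_two]

theorem polarUnit_ne_zero (θ : ℝ) : polarUnit θ ≠ 0 :=
  norm_ne_zero_iff.1 (by rw [norm_polarUnit]; exact one_ne_zero)

theorem continuous_polarUnit : Continuous polarUnit := by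
  unfold polarUnit
  fun_prop

theorem continuous_smul_polarUnit : Continuous fun p : ℝ × ℝ => p.1 • polarUnit p.2 :=
  continuous_fst.smul (continuous_polarUnit.comp continuous_snd)

theorem norm_smul_polarUnit {r : ℝ} (hr : 0 ≤ r) (θ : ℝ) : ‖r • polarUnit θ‖ = r := by
  rw [norm_smul, norm_polarUnit, mul_one, norm_of_nonneg hr]

theorem integral_eq_integral_polarCoord_target (g : EuclideanSpace ℝ (Fin 2) → ℝ) :
    ∫ x, g x = ∫ p in polarCoord.target, p.1 * g (p.1 • polarUnit p.2) := by
  have e := (EuclideanSpace.volume_preserving_symm_measurableEquiv_toLp (Fin 2)).trans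
    (volume_preserving_finTwoArrow ℝ)
  rw [← e.symm.integral_comp (MeasurableEquiv.measurableEmbedding _),
    ← integral_comp_polarCoord_symm]
  refine setIntegral_congr_fun polarCoord.open_target.measurableSet fun p _ => ?_
  simp only [smul_eq_mul]
  congr 2
  ext i
  fin_cases i <;> simp [polarUnit, polarCoord_symm_apply]

theorem setIntegral_eq_setIntegral_polarCoord_target_inter
    {A : Set (EuclideanSpace ℝ (Fin 2))} (hA : MeasurableSet A)
    (g : EuclideanSpace ℝ (Fin 2) → ℝ) :
    ∫ x in A, g x = ∫ p in polarCoord.target ∩ (fun p : ℝ × ℝ => p.1 • polarUnit p.2) ⁻¹' A,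
      p.1 * g (p.1 • polarUnit p.2) := by
  set φ : ℝ × ℝ → EuclideanSpace ℝ (Fin 2) := fun p => p.1 • polarUnit p.2
  rw [← MeasureTheory.integral_indicator hA, integral_eq_integral_polarCoord_target,
    ← setIntegral_indicator (continuous_smul_polarUnit.measurable hA)]
  refine setIntegral_congr_fun polarCoord.open_target.measurableSet fun p _ => ?_
  by_cases h : φ p ∈ A
  · rw [indicator_of_mem h, indicator_of_mem (s := φ ⁻¹' A) h]
  · rw [indicator_of_notMem h, indicator_of_notMem (s := φ ⁻¹' A) h, mul_zero]

theorem polarCoord_target_inter_preimage_annulus {L R : ℝ} (hL : 0 < L) :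
    polarCoord.target ∩ (fun p : ℝ × ℝ => p.1 • polarUnit p.2) ⁻¹'
        (Metric.ball 0 R \ Metric.ball 0 L) = Ico L R ×ˢ Ioo (-π) π := by
  ext ⟨r, θ⟩
  simp only [polarCoord_target, mem_inter_iff, mem_prod, mem_Ioi, mem_preimage, mem_sdiff,
    mem_ball_zero_iff, not_lt, mem_Ico]
  constructor
  · rintro ⟨⟨hr, hθ⟩, hR, hL'⟩
    rw [norm_smul_polarUnit hr.le] at hR hL'
    exact ⟨⟨hL', hR⟩, hθ⟩
  · rintro ⟨⟨hL', hR⟩, hθ⟩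
    have hr : 0 < r := hL.trans_le hL'
    rw [norm_smul_polarUnit hr.le]
    exact ⟨⟨hr, hθ⟩, hR, hL'⟩

theorem setIntegral_annulus_eq_polar {L R : ℝ} (hL : 0 < L) (g : EuclideanSpace ℝ (Fin 2) → ℝ) :
    ∫ x in Metric.ball 0 R \ Metric.ball 0 L, g x
      = ∫ p in Ico L R ×ˢ Ioo (-π) π, p.1 * g (p.1 • polarUnit p.2) := by
  rw [setIntegral_eq_setIntegral_polarCoord_target_inter
    (measurableSet_ball.diff measurableSet_ball), polarCoord_target_inter_preimage_annulus hL]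

section Plane

variable {v : EuclideanSpace ℝ (Fin 2) → ℝ} {L R : ℝ}

theorem setIntegral_annulus_abs_div_sq_eq_polar (hL : 0 < L) :
    ∫ x in Metric.ball 0 R \ Metric.ball 0 L, |v x| / ‖x‖ ^ 2
      = ∫ p in Ico L R ×ˢ Ioo (-π) π, |v (p.1 • polarUnit p.2)| / p.1 := by
  rw [setIntegral_annulus_eq_polar hL]
  refine setIntegral_congr_fun (measurableSet_Ico.prod measurableSet_Ioo) fun p hp => ?_
  have hr : 0 < p.1 := hL.trans_le hp.1.1
  rw [norm_smul_polarUnit hr.le]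
  field_simp

theorem integral_rayEnergy_polarUnit_eq (hv : ContDiffOn ℝ 1 v {0}ᶜ) (hL : 0 < L)
    (hLR : L ≤ R) :
    ∫ θ in Ioo (-π) π, rayEnergy v L R (polarUnit θ)
      = ∫ x in Metric.ball 0 R \ Metric.ball 0 L, ‖fderiv ℝ v x‖ ^ 2 := by
  have hcont : ContinuousOn (fun p : ℝ × ℝ => p.1 * ‖fderiv ℝ v (p.1 • polarUnit p.2)‖ ^ 2)
      (Icc L R ×ˢ Icc (-π) π) :=
    continuousOn_fst.mul (((hv.continuousOn_fderiv_of_isOpen isOpen_compl_singleton le_rfl).comp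
      continuous_smul_polarUnit.continuousOn fun p hp =>
        smul_ne_zero (hL.trans_le hp.1.1).ne' (polarUnit_ne_zero _)).norm.pow 2)
  have hint := (hcont.integrableOn_compact (μ := volume)
    (isCompact_Icc.prod isCompact_Icc)).mono_set (prod_mono Ico_subset_Icc_self Ioo_subset_Icc_self)
  rw [IntegrableOn, Measure.volume_eq_prod, ← Measure.prod_restrict] at hint
  rw [setIntegral_annulus_eq_polar hL, Measure.volume_eq_prod, ← Measure.prod_restrict,
    integral_prod_symm _ hint]
  refine setIntegral_congr_fun measurableSet_Ioo fun θ _ => ?_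
  rw [rayEnergy, integral_of_le hLR, setIntegral_congr_set Ico_ae_eq_Ioc]

theorem integral_sqrt_rayEnergy_polarUnit_le (hv : ContDiffOn ℝ 1 v {0}ᶜ) (hL : 0 < L)
    (hLR : L ≤ R) :
    ∫ θ in Ioo (-π) π, √(rayEnergy v L R (polarUnit θ))
      ≤ √(2 * π) * √(∫ x in Metric.ball 0 R \ Metric.ball 0 L, ‖fderiv ℝ v x‖ ^ 2) := by
  have hE := continuous_rayEnergy_comp hv continuous_polarUnit polarUnit_ne_zero hL hLR
  have hE₀ : ∀ θ, 0 ≤ rayEnergy v L R (polarUnit θ) := fun θ =>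
    integral_nonneg hLR fun s hs => mul_nonneg (hL.trans_le hs.1).le (sq_nonneg _)
  have memLp : ∀ φ : ℝ → ℝ, Continuous φ → MemLp φ 2 (volume.restrict (Ioo (-π) π)) :=
    fun φ hφ => (memLp_two_iff_integrable_sq hφ.aestronglyMeasurable).2
      ((hφ.pow 2).integrableOn_Icc.mono_set Ioo_subset_Icc_self)
  have hcs := integral_mul_le_sqrt_integral_sq_mul_sqrt_integral_sq
    (.of_forall fun θ => sqrt_nonneg (rayEnergy v L R (polarUnit θ)))
    (.of_forall fun _ => zero_le_one) (memLp _ (continuous_sqrt.comp hE)) (memLp _ continuous_const)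
  simp only [mul_one, one_pow, sq_sqrt (hE₀ _), integral_rayEnergy_polarUnit_eq hv hL hLR,
    setIntegral_const, smul_eq_mul] at hcs
  rwa [volume_real_Ioo_of_le (by linarith [pi_pos]), sub_neg_eq_add, ← two_mul, mul_comm] at hcs

theorem abs_apply_smul_polarUnit_div_le (hv : ContDiffOn ℝ 1 v {0}ᶜ)
    (hv₀ : ∀ x : EuclideanSpace ℝ (Fin 2), R ≤ ‖x‖ → v x = 0) (hL : 0 < L) {r θ : ℝ}
    (hLr : L ≤ r) (hrR : r ≤ R) :
    |v (r • polarUnit θ)| / r ≤ √(log (R / r)) / r * √(rayEnergy v L R (polarUnit θ)) := by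
  rw [div_mul_eq_mul_div, mul_comm]
  have hR : v (R • polarUnit θ) = 0 :=
    hv₀ _ (norm_smul_polarUnit (hL.trans_le (hLr.trans hrR)).le θ).ge
  exact div_le_div_of_nonneg_right
    (abs_apply_smul_le_sqrt_rayEnergy_mul_sqrt_log hv (norm_polarUnit θ) hL hLr hrR hR)
    (hL.trans_le hLr).le

theorem setIntegral_annulus_abs_div_sq_le (hv : ContDiffOn ℝ 1 v {0}ᶜ)
    (hv₀ : ∀ x : EuclideanSpace ℝ (Fin 2), R ≤ ‖x‖ → v x = 0) (hL : 0 < L) (hLR : L ≤ R) :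
    ∫ x in Metric.ball 0 R \ Metric.ball 0 L, |v x| / ‖x‖ ^ 2
      ≤ 2 / 3 * √(2 * π) * log (R / L) ^ ((3 : ℝ) / 2)
        * √(∫ x in Metric.ball 0 R \ Metric.ball 0 L, ‖fderiv ℝ v x‖ ^ 2) := by
  have hS : MeasurableSet (Ico L R ×ˢ Ioo (-π) π) := measurableSet_Ico.prod measurableSet_Ioo
  have hlog : 0 ≤ log (R / L) := log_nonneg ((one_le_div hL).2 hLR)
  have hradial : ContinuousOn (fun r => √(log (R / r)) / r) (Icc L R) :=
    (continuous_sqrt.comp_continuousOn (continuousOn_const.div continuousOn_id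
      (fun r hr => (hL.trans_le hr.1).ne') |>.log fun r hr =>
        (div_pos (hL.trans_le hLR) (hL.trans_le hr.1)).ne')).div continuousOn_id
      fun r hr => (hL.trans_le hr.1).ne'
  have hangular := continuous_sqrt.comp
    (continuous_rayEnergy_comp hv continuous_polarUnit polarUnit_ne_zero hL hLR)
  have hbound : IntegrableOn (fun p : ℝ × ℝ => √(log (R / p.1)) / p.1
      * √(rayEnergy v L R (polarUnit p.2))) (Ico L R ×ˢ Ioo (-π) π) := by
    rw [IntegrableOn, Measure.volume_eq_prod, ← Measure.prod_restrict]
    exact (hradial.integrableOn_Icc.mono_set Ico_subset_Icc_self).mul_prod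
      (hangular.integrableOn_Icc.mono_set Ioo_subset_Icc_self)
  calc ∫ x in Metric.ball 0 R \ Metric.ball 0 L, |v x| / ‖x‖ ^ 2
      = ∫ p in Ico L R ×ˢ Ioo (-π) π, |v (p.1 • polarUnit p.2)| / p.1 :=
        setIntegral_annulus_abs_div_sq_eq_polar hL
    _ ≤ ∫ p in Ico L R ×ˢ Ioo (-π) π, √(log (R / p.1)) / p.1
          * √(rayEnergy v L R (polarUnit p.2)) :=
        integral_mono_of_nonneg ((ae_restrict_iff' hS).2 (.of_forall fun p hp =>
          div_nonneg (abs_nonneg _) (hL.trans_le hp.1.1).le)) hbound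
          ((ae_restrict_iff' hS).2 (.of_forall fun p hp =>
            abs_apply_smul_polarUnit_div_le hv hv₀ hL hp.1.1 hp.1.2.le))
    _ = 2 / 3 * log (R / L) ^ ((3 : ℝ) / 2)
          * ∫ θ in Ioo (-π) π, √(rayEnergy v L R (polarUnit θ)) := by
        rw [Measure.volume_eq_prod, setIntegral_prod_mul (fun r => √(log (R / r)) / r)
          (fun θ => √(rayEnergy v L R (polarUnit θ))), setIntegral_congr_set Ico_ae_eq_Ioc,
          ← integral_of_le hLR, integral_sqrt_log_div_div hL hLR]
    _ ≤ 2 / 3 * log (R / L) ^ ((3 : ℝ) / 2)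
          * (√(2 * π) * √(∫ x in Metric.ball 0 R \ Metric.ball 0 L, ‖fderiv ℝ v x‖ ^ 2)) :=
        mul_le_mul_of_nonneg_left (integral_sqrt_rayEnergy_polarUnit_le hv hL hLR)
          (mul_nonneg (by norm_num) (rpow_nonneg hlog _))
    _ = _ := by ring

end Plane

/-- for `v ∈ C¹(B_{R'} \ {0})` vanishing outside `B_{R'}` in `ℝ²`,
`∫_{B_{R'}\B_L} |v|/r² ≤ C log^{3/2}(R'/L) ‖∇v‖_{L²(ℝ²)}`. -/
theorem radial_log_integral_bound :
    ∃ C : ℝ, 0 < C ∧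
      ∀ (L R' : ℝ) (v : EuclideanSpace ℝ (Fin 2) → ℝ),
        0 < L → L < R' →
        Continuous v →
        ContDiffOn ℝ 1 v ({(0 : EuclideanSpace ℝ (Fin 2))}ᶜ) →
        (∀ x : EuclideanSpace ℝ (Fin 2), R' ≤ ‖x‖ → v x = 0) →
        Integrable (fun x : EuclideanSpace ℝ (Fin 2) => ‖fderiv ℝ v x‖ ^ 2) →
        (∫ x in Metric.ball (0 : EuclideanSpace ℝ (Fin 2)) R' \ Metric.ball 0 L,
            |v x| / ‖x‖ ^ 2)
          ≤ C * (Real.log (R' / L)) ^ ((3 : ℝ) / 2) *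
            (∫ x : EuclideanSpace ℝ (Fin 2), ‖fderiv ℝ v x‖ ^ 2) ^ ((1 : ℝ) / 2) := by
  refine ⟨2 / 3 * √(2 * π), by positivity, fun L R' v hL hLR _ hv hv₀ hgrad => ?_⟩
  have hlog : 0 ≤ log (R' / L) := log_nonneg ((one_le_div hL).2 hLR.le)
  have hannulus : ∫ x in Metric.ball 0 R' \ Metric.ball 0 L, ‖fderiv ℝ v x‖ ^ 2
      ≤ ∫ x, ‖fderiv ℝ v x‖ ^ 2 :=
    setIntegral_le_integral hgrad (.of_forall fun _ => sq_nonneg _)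
  rw [← sqrt_eq_rpow]
  calc ∫ x in Metric.ball 0 R' \ Metric.ball 0 L, |v x| / ‖x‖ ^ 2
      ≤ 2 / 3 * √(2 * π) * log (R' / L) ^ ((3 : ℝ) / 2)
        * √(∫ x in Metric.ball 0 R' \ Metric.ball 0 L, ‖fderiv ℝ v x‖ ^ 2) :=
        setIntegral_annulus_abs_div_sq_le hv hv₀ hL hLR.le
    _ ≤ 2 / 3 * √(2 * π) * log (R' / L) ^ ((3 : ℝ) / 2) * √(∫ x, ‖fderiv ℝ v x‖ ^ 2) :=
        mul_le_mul_of_nonneg_left (sqrt_le_sqrt hannulus)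
          (mul_nonneg (by positivity) (rpow_nonneg hlog _))
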